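/- arXiv:2209.01399 — 2 statements merged into one kernel-verified Lean document; each statement's English description precedes it below -/
import Mathlib

section
/- If M is an R-module with only finitely many small submodules (an fs-module), then Rad(M) has finite length; in particular Rad(M) is both Artinian and Noetherian. -/
/-- A submodule `N` of `M` is small (superfluous): `N + A = M` implies `A = M`. -/
def IsSmallSubmodule {R M : Type*} [Ring R] [AddCommGroup M] [Module R M]
    (N : Submodule R M) : Prop :=
  ∀ A : Submodule R M, N ⊔ A = ⊤ → A = ⊤

/-- `M` is an fs-module: it has only finitely many small submodules. -/
def IsFsModule (R M : Type*) [Ring R] [AddCommGroup M] [Module R M] : Prop :=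
  {N : Submodule R M | IsSmallSubmodule N}.Finite

/-- The radical of `M`, as the sum of all small submodules of `M`. -/
def modRad (R M : Type*) [Ring R] [AddCommGroup M] [Module R M] : Submodule R M :=
  sSup {N : Submodule R M | IsSmallSubmodule N}

/-- The radical of `M`, as the intersection of all maximal submodules of `M`. -/
def modRad' (R M : Type*) [Ring R] [AddCommGroup M] [Module R M] : Submodule R M :=
  sInf {N : Submodule R M | IsCoatom N}

/-- The socle of `M`: the sum of all minimal (simple) submodules of `M`. -/
def modSoc (R M : Type*) [Ring R] [AddCommGroup M] [Module R M] : Submodule R M :=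
  sSup {N : Submodule R M | IsAtom N}

/-- `M` has finite hollow dimension: for every descending chain `N₁ ⊇ N₂ ⊇ ⋯`
there is `n` such that `Nₙ / N_k` is small in `M / N_k` for all `k ≥ n`. -/
def HasFiniteHollowDim (R M : Type*) [Ring R] [AddCommGroup M] [Module R M] : Prop :=
  ∀ N : ℕ → Submodule R M, (∀ i j, i ≤ j → N j ≤ N i) →
    ∃ n, ∀ k, n ≤ k → IsSmallSubmodule (Submodule.map (N k).mkQ (N n))

/-- `M` has finite Goldie dimension: it contains no infinite direct sum of
nonzero submodules. -/
def HasFiniteGoldieDim (R M : Type*) [Ring R] [AddCommGroup M] [Module R M] : Prop :=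
  ¬ ∃ f : ℕ → Submodule R M, (∀ i, f i ≠ ⊥) ∧ iSupIndep f

/-! A finite sum of small submodules is small, so in an fs-module `Rad M` is itself small.
Every submodule of `Rad M` is then small, hence there are only finitely many of them, and a
module with finitely many submodules is both Artinian and Noetherian. -/

section SmallSubmodule

variable {R M : Type*} [Ring R] [AddCommGroup M] [Module R M]

theorem IsSmallSubmodule.mono {N K : Submodule R M} (hN : IsSmallSubmodule N) (hKN : K ≤ N) :
    IsSmallSubmodule K :=
  fun A hA ↦ hN A (top_unique (hA ▸ sup_le_sup_right hKN A))

theorem isSmallSubmodule_bot : IsSmallSubmodule (⊥ : Submodule R M) :=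
  fun A hA ↦ by rwa [bot_sup_eq] at hA

theorem IsSmallSubmodule.sup {N K : Submodule R M} (hN : IsSmallSubmodule N)
    (hK : IsSmallSubmodule K) : IsSmallSubmodule (N ⊔ K) :=
  fun A hA ↦ hK A (hN (K ⊔ A) (by rwa [← sup_assoc]))

theorem supClosed_setOf_isSmallSubmodule :
    SupClosed {N : Submodule R M | IsSmallSubmodule N} :=
  fun _ hN _ hK ↦ IsSmallSubmodule.sup hN hK

theorem IsFsModule.isSmallSubmodule_modRad (hfs : IsFsModule R M) :
    IsSmallSubmodule (modRad R M) :=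
  supClosed_setOf_isSmallSubmodule.sSup_mem hfs isSmallSubmodule_bot subset_rfl

theorem IsFsModule.finite_submodule_of_isSmallSubmodule (hfs : IsFsModule R M)
    {N : Submodule R M} (hN : IsSmallSubmodule N) : Finite (Submodule R N) :=
  have : Finite {P : Submodule R M // P ≤ N} :=
    (hfs.subset fun _ hP ↦ hN.mono hP).to_subtype
  .of_equiv _ (Submodule.MapSubtype.orderIso N).symm.toEquiv

end SmallSubmodule

theorem isFiniteLength_of_finite_submodule (R N : Type*) [Ring R] [AddCommGroup N] [Module R N]
    [Finite (Submodule R N)] : IsFiniteLength R N :=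
  (isFiniteLength_iff_isNoetherian_isArtinian ..).mpr
    ⟨isNoetherian_iff'.mpr inferInstance, inferInstance⟩

theorem rad_finiteLength_of_fs (R M : Type*) [Ring R] [AddCommGroup M] [Module R M]
    (hfs : IsFsModule R M) :
    IsFiniteLength R (modRad R M) ∧ IsArtinian R (modRad R M) ∧
      IsNoetherian R (modRad R M) := by
  have := hfs.finite_submodule_of_isSmallSubmodule hfs.isSmallSubmodule_modRad
  have hlen := isFiniteLength_of_finite_submodule R (modRad R M)
  obtain ⟨hnoeth, hart⟩ := (isFiniteLength_iff_isNoetherian_isArtinian ..).mp hlen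
  exact ⟨hlen, hart, hnoeth⟩
end

section
/- Let M be an fs-module. Then M is Noetherian if and only if M/Rad(M) is Noetherian, and M is Artinian if and only if M/Rad(M) is Artinian. -/
/-! The radical is the sum of the finitely many small submodules, so it is itself small. Hence every
submodule of `Rad M` is small, so `Rad M` has only finitely many submodules and is therefore both
Noetherian and Artinian. Both chain conditions are closed under extensions, so each holds for `M`
exactly when it holds for `M / Rad M`. -/

section

variable {R M : Type*} [Ring R] [AddCommGroup M] [Module R M]

namespace IsSmallSubmodule

theorem mono_s4 {N K : Submodule R M} (hN : IsSmallSubmodule N) (hKN : K ≤ N) :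
    IsSmallSubmodule K :=
  fun A hA => hN A (top_le_iff.mp (hA ▸ sup_le_sup_right hKN A))

theorem sup_s4 {N K : Submodule R M} (hN : IsSmallSubmodule N) (hK : IsSmallSubmodule K) :
    IsSmallSubmodule (N ⊔ K) :=
  fun A hA => hK A (hN (K ⊔ A) (by rwa [← sup_assoc]))

theorem bot : IsSmallSubmodule (⊥ : Submodule R M) :=
  fun A hA => by simpa using hA

theorem sSup_of_finite {S : Set (Submodule R M)} (hS : S.Finite)
    (hsmall : ∀ N ∈ S, IsSmallSubmodule N) : IsSmallSubmodule (sSup S) := by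
  induction S, hS using Set.Finite.induction_on with
  | empty => simpa using bot
  | @insert N S _ _ ih =>
    rw [sSup_insert]
    exact (hsmall N (Set.mem_insert _ _)).sup_s4 (ih fun K hK => hsmall K (Set.mem_insert_of_mem _ hK))

end IsSmallSubmodule

namespace IsFsModule

theorem isSmallSubmodule_modRad_s4 (hfs : IsFsModule R M) : IsSmallSubmodule (modRad R M) :=
  IsSmallSubmodule.sSup_of_finite hfs fun _ hN => hN

theorem finite_submodule_of_isSmallSubmodule_s4 (hfs : IsFsModule R M) {N : Submodule R M}
    (hN : IsSmallSubmodule N) : Finite (Submodule R N) :=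
  have : Finite {K : Submodule R M // K ≤ N} :=
    (hfs.subset fun _ hKN => hN.mono_s4 hKN).to_subtype
  .of_equiv _ (Submodule.MapSubtype.orderIso N).toEquiv.symm

end IsFsModule

theorem isNoetherian_iff_quotient_of_finite_submodule (N : Submodule R M)
    [Finite (Submodule R N)] : IsNoetherian R M ↔ IsNoetherian R (M ⧸ N) := by
  have : IsNoetherian R N := isNoetherian_mk inferInstance
  simp only [isNoetherian_iff_submodule_quotient N, this, true_and]

theorem isArtinian_iff_quotient_of_finite_submodule (N : Submodule R M)
    [Finite (Submodule R N)] : IsArtinian R M ↔ IsArtinian R (M ⧸ N) := by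
  have : IsArtinian R N := inferInstance
  simp only [isArtinian_iff_submodule_quotient N, this, true_and]

end

theorem fs_noetherian_artinian_iff_quotient (R M : Type*) [Ring R] [AddCommGroup M]
    [Module R M] (hfs : IsFsModule R M) :
    (IsNoetherian R M ↔ IsNoetherian R (M ⧸ modRad R M)) ∧
    (IsArtinian R M ↔ IsArtinian R (M ⧸ modRad R M)) := by
  have := hfs.finite_submodule_of_isSmallSubmodule_s4 hfs.isSmallSubmodule_modRad_s4
  exact ⟨isNoetherian_iff_quotient_of_finite_submodule _,
    isArtinian_iff_quotient_of_finite_submodule _⟩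
end
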